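/- arXiv:2308.16862 — 2 statements merged into one kernel-verified Lean document; each statement's English description precedes it below -/
import Mathlib

section
/- Let b > 1, m > 0, n > 0 be real, q ≥ 0 an integer, z_k := exp(−n(b−1)/(m·b^k)), t := b^{−q}/(b−1), and let p̃(w, β_1,…,β_q) := z_w^{1/(b−1)}·(1−z_w)·∏_{j=1}^q z_{w−j}^{1−β_j}·(1−z_{w−j})^{β_j}. Then (assuming all series converge absolutely) ∑_{w∈ℤ} ∑_{β_1,…,β_q∈{0,1}} p̃(w, β_1,…,β_q) · ln p̃(w, β_1,…,β_q) = ∑_{w∈ℤ} [ z_w^{1/(b−1)}·(ln z_w)·(1 − b·z_w)/(b−1) + z_w^{t}·( z_w·ln z_w + (1−z_w)·ln(1−z_w) ) ]. -/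
open Real Finset

/-- z_k = exp(−n(b−1)/(m·b^k)). -/
noncomputable def zf (b m n : ℝ) (k : ℤ) : ℝ :=
  Real.exp (-(n * (b - 1)) / (m * b ^ k))

/-- The simplified register probability mass. -/
noncomputable def ptilde (b m n : ℝ) (q : ℕ) (w : ℤ) (β : Fin q → Fin 2) : ℝ :=
  zf b m n w ^ (1 / (b - 1)) * (1 - zf b m n w) *
    ∏ j : Fin q,
      zf b m n (w - ((j : ℕ) : ℤ) - 1) ^ (1 - (β j : ℕ)) *
        (1 - zf b m n (w - ((j : ℕ) : ℤ) - 1)) ^ ((β j : ℕ))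

/-- Sum over boolean vectors of a product equals product of the binary sums. -/
lemma sum_fun_prod {ι : Type*} [Fintype ι] [DecidableEq ι] (G : ι → Fin 2 → ℝ) :
    ∑ β : ι → Fin 2, ∏ j, G j (β j) = ∏ j, (G j 0 + G j 1) := by
  have h := Finset.prod_univ_sum (fun _ : ι => (univ : Finset (Fin 2))) (fun j x => G j x)
  rw [Fintype.piFinset_univ] at h
  simp only [Fin.sum_univ_two] at h
  exact h.symm

/-- Entropy-style sum for a product of independent binary factors. -/
lemma sum_prod_log {ι : Type*} [Fintype ι] [DecidableEq ι] (A : ℝ) (hA : 0 < A)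
    (F : ι → Fin 2 → ℝ) (hF : ∀ j x, 0 < F j x) (hs : ∀ j, F j 0 + F j 1 = 1) :
    ∑ β : ι → Fin 2, (A * ∏ j, F j (β j)) * Real.log (A * ∏ j, F j (β j))
      = A * Real.log A
        + A * ∑ j, (F j 0 * Real.log (F j 0) + F j 1 * Real.log (F j 1)) := by
  have hprod1 : ∑ β : ι → Fin 2, ∏ j, F j (β j) = 1 := by
    rw [sum_fun_prod]; simp [hs]
  have hPpos : ∀ β : ι → Fin 2, 0 < ∏ j, F j (β j) := fun β =>
    Finset.prod_pos (fun j _ => hF j (β j))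
  have hlog : ∀ β : ι → Fin 2, Real.log (A * ∏ j, F j (β j))
      = Real.log A + ∑ j, Real.log (F j (β j)) := by
    intro β
    rw [Real.log_mul (ne_of_gt hA) (ne_of_gt (hPpos β)),
      Real.log_prod (fun j _ => ne_of_gt (hF j (β j)))]
  have key : ∀ j0 : ι, ∑ β : ι → Fin 2, (∏ j, F j (β j)) * Real.log (F j0 (β j0))
      = F j0 0 * Real.log (F j0 0) + F j0 1 * Real.log (F j0 1) := by
    intro j0
    have h1 : ∀ β : ι → Fin 2, (∏ j, F j (β j)) * Real.log (F j0 (β j0))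
        = ∏ j, (F j (β j) * if j = j0 then Real.log (F j0 (β j)) else 1) := by
      intro β
      rw [Finset.prod_mul_distrib, Finset.prod_ite_eq']
      simp
    simp_rw [h1]
    rw [sum_fun_prod (fun j x => F j x * if j = j0 then Real.log (F j0 x) else 1)]
    have h2 : ∀ j : ι, ((F j 0 * if j = j0 then Real.log (F j0 0) else 1)
          + (F j 1 * if j = j0 then Real.log (F j0 1) else 1))
        = if j = j0 then F j0 0 * Real.log (F j0 0) + F j0 1 * Real.log (F j0 1) else 1 := by
      intro j
      by_cases h : j = j0 <;> simp [h, hs j]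
    rw [Finset.prod_congr rfl (fun j _ => h2 j), Finset.prod_ite_eq']
    simp
  have expand : ∀ β : ι → Fin 2, (A * ∏ j, F j (β j)) * Real.log (A * ∏ j, F j (β j))
      = (A * ∏ j, F j (β j)) * Real.log A
        + ∑ j, A * ((∏ i, F i (β i)) * Real.log (F j (β j))) := by
    intro β
    rw [hlog β, mul_add, Finset.mul_sum]
    simp [mul_assoc]
  rw [Finset.sum_congr rfl (fun β _ => expand β), Finset.sum_add_distrib]
  congr 1
  · rw [← Finset.sum_mul, ← Finset.mul_sum, hprod1, mul_one]
  · rw [Finset.sum_comm, Finset.mul_sum]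
    exact Finset.sum_congr rfl (fun j _ => by rw [← Finset.mul_sum, key j])

/-- The marginal mass of a register value. -/
noncomputable def Af (b m n : ℝ) (w : ℤ) : ℝ :=
  zf b m n w ^ (1 / (b - 1)) * (1 - zf b m n w)

/-- The binary-entropy-like quantity. -/
noncomputable def gf (b m n : ℝ) (k : ℤ) : ℝ :=
  zf b m n k * Real.log (zf b m n k) + (1 - zf b m n k) * Real.log (1 - zf b m n k)

lemma zf_pos (b m n : ℝ) (k : ℤ) : 0 < zf b m n k := Real.exp_pos _

lemma zf_lt_one {b m n : ℝ} (hb : 1 < b) (hm : 0 < m) (hn : 0 < n) (k : ℤ) :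
    zf b m n k < 1 := by
  rw [zf, Real.exp_lt_one_iff]
  apply div_neg_of_neg_of_pos
  · nlinarith
  · exact mul_pos hm (zpow_pos (by linarith) k)

lemma Af_pos {b m n : ℝ} (hb : 1 < b) (hm : 0 < m) (hn : 0 < n) (w : ℤ) :
    0 < Af b m n w :=
  mul_pos (Real.rpow_pos_of_pos (zf_pos b m n w) _)
    (by linarith [zf_lt_one hb hm hn w])

lemma Af_le_one {b m n : ℝ} (hb : 1 < b) (hm : 0 < m) (hn : 0 < n) (w : ℤ) :
    Af b m n w ≤ 1 := by
  have h1 : zf b m n w ^ (1 / (b - 1)) ≤ 1 :=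
    Real.rpow_le_one (le_of_lt (zf_pos b m n w)) (le_of_lt (zf_lt_one hb hm hn w))
      (le_of_lt (one_div_pos.mpr (by linarith)))
  have h2 : 1 - zf b m n w ≤ 1 := by linarith [zf_pos b m n w]
  have h3 : (0:ℝ) ≤ 1 - zf b m n w := by linarith [zf_lt_one hb hm hn w]
  calc Af b m n w ≤ 1 * (1 - zf b m n w) := by
        exact mul_le_mul_of_nonneg_right h1 h3
    _ ≤ 1 := by linarith

lemma gf_nonpos {b m n : ℝ} (hb : 1 < b) (hm : 0 < m) (hn : 0 < n) (k : ℤ) :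
    gf b m n k ≤ 0 := by
  have h0 := zf_pos b m n k
  have h1 := zf_lt_one hb hm hn k
  have l1 : Real.log (zf b m n k) ≤ 0 := Real.log_nonpos (le_of_lt h0) (le_of_lt h1)
  have l2 : Real.log (1 - zf b m n k) ≤ 0 := Real.log_nonpos (by linarith) (by linarith)
  have := mul_nonpos_of_nonneg_of_nonpos (le_of_lt h0) l1
  have := mul_nonpos_of_nonneg_of_nonpos (by linarith : (0:ℝ) ≤ 1 - zf b m n k) l2
  rw [gf]; linarith

/-- key1 : the β-sum at a fixed w. -/
lemma key1 {b m n : ℝ} (hb : 1 < b) (hm : 0 < m) (hn : 0 < n) (q : ℕ) (w : ℤ) :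
    ∑ β : Fin q → Fin 2, ptilde b m n q w β * Real.log (ptilde b m n q w β)
      = Af b m n w * Real.log (Af b m n w)
        + Af b m n w * ∑ j ∈ range q, gf b m n (w - (j : ℤ) - 1) := by
  have hz0 : ∀ k : ℤ, 0 < zf b m n k := zf_pos b m n
  have hz1 : ∀ k : ℤ, zf b m n k < 1 := zf_lt_one hb hm hn
  set F : Fin q → Fin 2 → ℝ := fun j x =>
    zf b m n (w - ((j : ℕ) : ℤ) - 1) ^ (1 - (x : ℕ)) *
      (1 - zf b m n (w - ((j : ℕ) : ℤ) - 1)) ^ ((x : ℕ)) with hF_def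
  have hF : ∀ j x, 0 < F j x := fun j x =>
    mul_pos (pow_pos (hz0 _) _) (pow_pos (by linarith [hz1 (w - ((j:ℕ):ℤ) - 1)]) _)
  have hs : ∀ j, F j 0 + F j 1 = 1 := by
    intro j; simp [hF_def]
  have hA : 0 < zf b m n w ^ (1 / (b - 1)) * (1 - zf b m n w) := Af_pos hb hm hn w
  have hpt : ∀ β : Fin q → Fin 2, ptilde b m n q w β
      = (zf b m n w ^ (1 / (b - 1)) * (1 - zf b m n w)) * ∏ j, F j (β j) := fun β => rfl
  simp_rw [hpt]
  have h := sum_prod_log _ hA F hF hs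
  rw [h]
  simp only [Af, gf]
  congr 1
  congr 1
  have hterm : ∀ j : Fin q, F j 0 * Real.log (F j 0) + F j 1 * Real.log (F j 1)
      = (fun i : ℕ =>
          zf b m n (w - (i : ℤ) - 1) * Real.log (zf b m n (w - (i : ℤ) - 1))
            + (1 - zf b m n (w - (i : ℤ) - 1)) * Real.log (1 - zf b m n (w - (i : ℤ) - 1)))
          (j : ℕ) := by
    intro j; simp [hF_def]
  rw [Finset.sum_congr rfl (fun j _ => hterm j)]
  rw [Fin.sum_univ_eq_sum_range (fun i : ℕ =>
    zf b m n (w - (i : ℤ) - 1) * Real.log (zf b m n (w - (i : ℤ) - 1))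
      + (1 - zf b m n (w - (i : ℤ) - 1)) * Real.log (1 - zf b m n (w - (i : ℤ) - 1))) q]

/-- Telescoping sum of shifted A-factors. -/
lemma tele {b m n : ℝ} (hb : 1 < b) (hm : 0 < m) (hn : 0 < n) (q : ℕ) (w : ℤ) :
    ∑ j ∈ range q, Af b m n (w + (j : ℤ) + 1)
      = zf b m n w ^ ((b : ℝ) ^ (-(q : ℤ)) / (b - 1)) - zf b m n w ^ (1 / (b - 1)) := by
  have hb0 : (0:ℝ) < b := by linarith
  have hbne : b ≠ 0 := ne_of_gt hb0
  have hb1 : b - 1 ≠ 0 := by intro h; linarith [h]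
  set a : ℝ := -(n * (b - 1)) / (m * b ^ w) with ha_def
  set E : ℕ → ℝ := fun i => Real.exp (a * ((b : ℝ) ^ (-(i : ℤ)) / (b - 1))) with hE_def
  have hzw : ∀ i : ℕ, zf b m n (w + (i : ℤ) + 1) = Real.exp (a * b ^ (-(i : ℤ) - 1)) := by
    intro i
    rw [zf]
    congr 1
    rw [show w + (i : ℤ) + 1 = w + ((i : ℤ) + 1) by ring, zpow_add₀ hbne, ha_def]
    have h1 : (b : ℝ) ^ (-(i : ℤ) - 1) = ((b : ℝ) ^ ((i : ℤ) + 1))⁻¹ := by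
      rw [← zpow_neg]; congr 1; ring
    rw [h1]
    have h2 : (b : ℝ) ^ ((i : ℤ) + 1) ≠ 0 := zpow_ne_zero _ hbne
    have h3 : (b : ℝ) ^ w ≠ 0 := zpow_ne_zero _ hbne
    field_simp
  have hterm : ∀ j ∈ range q, Af b m n (w + (j : ℤ) + 1) = E (j + 1) - E j := by
    intro j _
    rw [Af, hzw j, ← Real.exp_mul, mul_sub, mul_one, ← Real.exp_add, hE_def]
    have hpow : (b:ℝ) ^ (-(j:ℤ)) = (b:ℝ) ^ (-(j:ℤ) - 1) * b := by
      rw [← zpow_add_one₀ hbne]; congr 1; ring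
    congr 2
    · push_cast
      ring
    · rw [hpow]
      field_simp
      ring_nf
  rw [Finset.sum_congr rfl hterm, Finset.sum_range_sub E q]
  have hzeq : zf b m n w = Real.exp a := rfl
  rw [hzeq, ← Real.exp_mul, ← Real.exp_mul, hE_def]
  simp only [Nat.cast_zero, neg_zero, zpow_zero]

/-- key2 : pointwise identity after shifting. -/
lemma key2 {b m n t : ℝ} (hb : 1 < b) (hm : 0 < m) (hn : 0 < n) (q : ℕ)
    (ht : t = b ^ (-(q : ℤ)) / (b - 1)) (w : ℤ) :
    Af b m n w * Real.log (Af b m n w)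
      + ∑ j ∈ range q, Af b m n (w + (j : ℤ) + 1) * gf b m n w
      = zf b m n w ^ (1 / (b - 1)) * Real.log (zf b m n w) * (1 - b * zf b m n w) / (b - 1)
        + zf b m n w ^ t * (zf b m n w * Real.log (zf b m n w)
            + (1 - zf b m n w) * Real.log (1 - zf b m n w)) := by
  rw [← Finset.sum_mul, tele hb hm hn q w, ht]
  have hz0 : 0 < zf b m n w := zf_pos b m n w
  have hz1 : zf b m n w < 1 := zf_lt_one hb hm hn w
  have hb1 : b - 1 ≠ 0 := by intro h; linarith [h]
  have hlogA : Real.log (Af b m n w)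
      = (1 / (b - 1)) * Real.log (zf b m n w) + Real.log (1 - zf b m n w) := by
    rw [Af, Real.log_mul (ne_of_gt (Real.rpow_pos_of_pos hz0 _)) (by linarith),
      Real.log_rpow hz0]
  rw [hlogA, Af, gf]
  field_simp
  ring

/-- the exact (negative) Shannon entropy identity for a single register
under the simplified model. -/
theorem entropy_sum_identity (b m n t : ℝ) (hb : 1 < b) (hm : 0 < m) (hn : 0 < n)
    (q : ℕ) (ht : t = b ^ (-(q : ℤ)) / (b - 1))
    (hL : Summable fun w : ℤ =>
      ∑ β : Fin q → Fin 2, |ptilde b m n q w β * Real.log (ptilde b m n q w β)|)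
    (hR : Summable fun w : ℤ =>
      |zf b m n w ^ (1 / (b - 1)) * Real.log (zf b m n w) * (1 - b * zf b m n w) / (b - 1)
        + zf b m n w ^ t * (zf b m n w * Real.log (zf b m n w)
            + (1 - zf b m n w) * Real.log (1 - zf b m n w))|) :
    (∑' w : ℤ, ∑ β : Fin q → Fin 2, ptilde b m n q w β * Real.log (ptilde b m n q w β))
      = ∑' w : ℤ,
          (zf b m n w ^ (1 / (b - 1)) * Real.log (zf b m n w) * (1 - b * zf b m n w) / (b - 1)
            + zf b m n w ^ t * (zf b m n w * Real.log (zf b m n w)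
                + (1 - zf b m n w) * Real.log (1 - zf b m n w))) := by
  clear hR
  set S0 : ℤ → ℝ := fun w => Af b m n w * Real.log (Af b m n w) with hS0_def
  set h : ℕ → ℤ → ℝ := fun j w => Af b m n w * gf b m n (w - (j : ℤ) - 1) with hh_def
  set kk : ℕ → ℤ → ℝ := fun j w => Af b m n (w + (j : ℤ) + 1) * gf b m n w with hkk_def
  have hS0_nonpos : ∀ w, S0 w ≤ 0 := fun w =>
    mul_nonpos_of_nonneg_of_nonpos (le_of_lt (Af_pos hb hm hn w))
      (Real.log_nonpos (le_of_lt (Af_pos hb hm hn w)) (Af_le_one hb hm hn w))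
  have hh_nonpos : ∀ j w, h j w ≤ 0 := fun j w =>
    mul_nonpos_of_nonneg_of_nonpos (le_of_lt (Af_pos hb hm hn w))
      (gf_nonpos hb hm hn _)
  -- key1 in h-form
  have hkey1 : ∀ w : ℤ,
      ∑ β : Fin q → Fin 2, ptilde b m n q w β * Real.log (ptilde b m n q w β)
        = S0 w + ∑ j ∈ range q, h j w := by
    intro w
    rw [key1 hb hm hn q w, hS0_def, hh_def, Finset.mul_sum]
  -- the abs sums in hL are exactly the negatives
  have hLsum : ∀ w : ℤ,
      (∑ β : Fin q → Fin 2, |ptilde b m n q w β * Real.log (ptilde b m n q w β)|)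
        = -S0 w + ∑ j ∈ range q, (-(h j w)) := by
    intro w
    have habs : ∀ β : Fin q → Fin 2,
        |ptilde b m n q w β * Real.log (ptilde b m n q w β)|
          = -(ptilde b m n q w β * Real.log (ptilde b m n q w β)) := by
      intro β
      apply abs_of_nonpos
      have hp0 : 0 < ptilde b m n q w β := by
        rw [ptilde]
        apply mul_pos (Af_pos hb hm hn w)
        apply Finset.prod_pos
        intro j _
        exact mul_pos (pow_pos (zf_pos b m n _) _)
          (pow_pos (by linarith [zf_lt_one hb hm hn (w - ((j:ℕ):ℤ) - 1)]) _)
      have hp1 : ptilde b m n q w β ≤ 1 := by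
        have hpAf : ptilde b m n q w β = Af b m n w *
            ∏ j : Fin q, zf b m n (w - ((j : ℕ) : ℤ) - 1) ^ (1 - (β j : ℕ)) *
              (1 - zf b m n (w - ((j : ℕ) : ℤ) - 1)) ^ ((β j : ℕ)) := rfl
        rw [hpAf]
        have hprod : (∏ j : Fin q,
            zf b m n (w - ((j : ℕ) : ℤ) - 1) ^ (1 - (β j : ℕ)) *
              (1 - zf b m n (w - ((j : ℕ) : ℤ) - 1)) ^ ((β j : ℕ))) ≤ 1 := by
          apply Finset.prod_le_one
          · intro j _
            exact le_of_lt (mul_pos (pow_pos (zf_pos b m n _) _)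
              (pow_pos (by linarith [zf_lt_one hb hm hn (w - ((j:ℕ):ℤ) - 1)]) _))
          · intro j _
            have hz0 := zf_pos b m n (w - ((j:ℕ):ℤ) - 1)
            have hz1 := zf_lt_one hb hm hn (w - ((j:ℕ):ℤ) - 1)
            apply mul_le_one₀
            · exact pow_le_one₀ (le_of_lt hz0) (le_of_lt hz1)
            · exact pow_nonneg (by linarith) _
            · exact pow_le_one₀ (by linarith) (by linarith)
        have hAf1 := Af_le_one hb hm hn w
        have hAf0 := Af_pos hb hm hn w
        have hprod0 : (0:ℝ) ≤ ∏ j : Fin q,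
            zf b m n (w - ((j : ℕ) : ℤ) - 1) ^ (1 - (β j : ℕ)) *
              (1 - zf b m n (w - ((j : ℕ) : ℤ) - 1)) ^ ((β j : ℕ)) := by
          apply Finset.prod_nonneg
          intro j _
          exact le_of_lt (mul_pos (pow_pos (zf_pos b m n _) _)
            (pow_pos (by linarith [zf_lt_one hb hm hn (w - ((j:ℕ):ℤ) - 1)]) _))
        calc Af b m n w *
              (∏ j : Fin q, zf b m n (w - ((j : ℕ) : ℤ) - 1) ^ (1 - (β j : ℕ)) *
                (1 - zf b m n (w - ((j : ℕ) : ℤ) - 1)) ^ ((β j : ℕ)))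
              ≤ 1 * 1 := mul_le_mul hAf1 hprod hprod0 (by norm_num)
          _ = 1 := by norm_num
      exact mul_nonpos_of_nonneg_of_nonpos (le_of_lt hp0)
        (Real.log_nonpos (le_of_lt hp0) hp1)
    rw [Finset.sum_congr rfl (fun β _ => habs β), Finset.sum_neg_distrib, hkey1 w,
      Finset.sum_neg_distrib]
    ring
  -- summability of the pieces
  have hS0sum : Summable S0 := by
    rw [← summable_neg_iff]
    apply Summable.of_nonneg_of_le (fun w => neg_nonneg.mpr (hS0_nonpos w)) _ hL
    intro w
    rw [hLsum w]
    have : 0 ≤ ∑ j ∈ range q, (-(h j w)) :=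
      Finset.sum_nonneg (fun j _ => neg_nonneg.mpr (hh_nonpos j w))
    linarith
  have hhsum : ∀ j ∈ range q, Summable (h j) := by
    intro j hj
    rw [← summable_neg_iff]
    apply Summable.of_nonneg_of_le (fun w => neg_nonneg.mpr (hh_nonpos j w)) _ hL
    intro w
    rw [hLsum w]
    have h1 : -(h j w) ≤ ∑ j' ∈ range q, (-(h j' w)) :=
      Finset.single_le_sum (fun i _ => neg_nonneg.mpr (hh_nonpos i w)) hj
    have h2 := hS0_nonpos w
    linarith
  -- kk is a shift of h
  have hkk_eq : ∀ j : ℕ, ∀ w : ℤ, h j (w + ((j : ℤ) + 1)) = kk j w := by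
    intro j w
    show Af b m n (w + ((j:ℤ) + 1)) * gf b m n (w + ((j:ℤ) + 1) - (j:ℤ) - 1)
      = Af b m n (w + (j:ℤ) + 1) * gf b m n w
    have e2 : w + ((j:ℤ) + 1) - (j:ℤ) - 1 = w := by ring
    have e1 : w + ((j:ℤ) + 1) = w + (j:ℤ) + 1 := by ring
    rw [e2, e1]
  have hkksum : ∀ j ∈ range q, Summable (kk j) := by
    intro j hj
    have := ((Equiv.addRight ((j:ℤ) + 1)).summable_iff (f := h j)).mpr (hhsum j hj)
    have heq : (h j) ∘ (Equiv.addRight ((j:ℤ) + 1)) = kk j := by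
      funext w
      exact hkk_eq j w
    rwa [heq] at this
  have htsum_kk : ∀ j ∈ range q, ∑' w : ℤ, kk j w = ∑' w : ℤ, h j w := by
    intro j _
    rw [← (Equiv.addRight ((j:ℤ) + 1)).tsum_eq (h j)]
    exact tsum_congr (fun w => (hkk_eq j w).symm)
  calc (∑' w : ℤ, ∑ β : Fin q → Fin 2, ptilde b m n q w β * Real.log (ptilde b m n q w β))
      = ∑' w : ℤ, (S0 w + ∑ j ∈ range q, h j w) := tsum_congr hkey1
    _ = (∑' w : ℤ, S0 w) + ∑' w : ℤ, ∑ j ∈ range q, h j w :=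
        Summable.tsum_add hS0sum (summable_sum hhsum)
    _ = (∑' w : ℤ, S0 w) + ∑ j ∈ range q, ∑' w : ℤ, h j w := by rw [Summable.tsum_finsetSum hhsum]
    _ = (∑' w : ℤ, S0 w) + ∑ j ∈ range q, ∑' w : ℤ, kk j w := by
        rw [Finset.sum_congr rfl (fun j hj => (htsum_kk j hj).symm)]
    _ = (∑' w : ℤ, S0 w) + ∑' w : ℤ, ∑ j ∈ range q, kk j w := by rw [Summable.tsum_finsetSum hkksum]
    _ = ∑' w : ℤ, (S0 w + ∑ j ∈ range q, kk j w) :=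
        (Summable.tsum_add hS0sum (summable_sum hkksum)).symm
    _ = _ := tsum_congr (fun w => key2 hb hm hn q ht w)
end

section
/- Let b > 1 and a > 0 be real. Then (b³ − b² + 1)^{−a} − (b³ − b² + b)^{−a} − (b³ − b + 1)^{−a} + b^{−3a} > 0. -/
open Real

lemma strictConvexOn_rpow_neg (a : ℝ) (ha : 0 < a) :
    StrictConvexOn ℝ (Set.Ioi (0:ℝ)) (fun x : ℝ ↦ x ^ (-a)) := by
  apply strictConvexOn_of_deriv2_pos (convex_Ioi 0)
  · exact fun x hx =>
      (Real.continuousAt_rpow_const x (-a) (Or.inl (ne_of_gt hx))).continuousWithinAt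
  · intro x hx
    rw [interior_Ioi] at hx
    have heq : deriv (fun x : ℝ ↦ x ^ (-a)) =ᶠ[nhds x] fun y ↦ (-a) * y ^ (-a - 1) := by
      filter_upwards [Ioi_mem_nhds hx] with y hy
      exact (Real.hasDerivAt_rpow_const (p := -a) (Or.inl (ne_of_gt hy))).deriv
    have h2 : deriv^[2] (fun x : ℝ ↦ x ^ (-a)) x
        = deriv (fun y : ℝ ↦ (-a) * y ^ (-a - 1)) x := by
      show deriv (deriv (fun x : ℝ ↦ x ^ (-a))) x = _
      exact heq.deriv_eq
    rw [h2]
    have hd : HasDerivAt (fun y : ℝ ↦ (-a) * y ^ (-a - 1))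
        ((-a) * ((-a - 1) * x ^ (-a - 1 - 1))) x :=
      (Real.hasDerivAt_rpow_const (p := -a - 1) (Or.inl (ne_of_gt hx))).const_mul (-a)
    rw [hd.deriv]
    have hxp : 0 < x ^ (-a - 1 - 1) := Real.rpow_pos_of_pos hx _
    have h1 : (0:ℝ) < a + 1 := by linarith
    nlinarith [mul_pos (mul_pos ha h1) hxp]

/-- positivity of the FGRA coefficient function η₂. -/
theorem eta2_pos (b a : ℝ) (hb : 1 < b) (ha : 0 < a) :
    0 < (b ^ 3 - b ^ 2 + 1) ^ (-a) - (b ^ 3 - b ^ 2 + b) ^ (-a)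
        - (b ^ 3 - b + 1) ^ (-a) + b ^ (-(3 * a)) := by
  have hb0 : (0:ℝ) < b := lt_trans one_pos hb
  have hkey : b ^ (-(3 * a)) = ((b ^ 3 : ℝ)) ^ (-a) := by
    rw [show -(3 * a) = (3:ℝ) * (-a) by ring, Real.rpow_mul hb0.le]
    rw [show (3:ℝ) = ((3:ℕ):ℝ) by norm_num, Real.rpow_natCast]
  rw [hkey]
  set f : ℝ → ℝ := fun x ↦ x ^ (-a) with hf
  have hconv := strictConvexOn_rpow_neg a ha
  have hx1 : (0:ℝ) < b ^ 3 - b ^ 2 + 1 := by nlinarith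
  have hx4 : (0:ℝ) < b ^ 3 := by positivity
  have hne : b ^ 3 - b ^ 2 + 1 ≠ b ^ 3 := by nlinarith
  have hs : (0:ℝ) < 1 / (b + 1) := by positivity
  have h1s : (0:ℝ) < 1 - 1 / (b + 1) := by
    rw [sub_pos, div_lt_one (by linarith)]; linarith
  set s : ℝ := 1 / (b + 1) with hsdef
  have hsum : (1 - s) + s = 1 := by ring
  have hsum' : s + (1 - s) = 1 := by ring
  have hbne : b + 1 ≠ 0 := by positivity
  have h2 := hconv.2 (Set.mem_Ioi.mpr hx1) (Set.mem_Ioi.mpr hx4) hne h1s hs hsum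
  have h3 := hconv.2 (Set.mem_Ioi.mpr hx1) (Set.mem_Ioi.mpr hx4) hne hs h1s hsum'
  have e2 : (1 - s) • (b ^ 3 - b ^ 2 + 1) + s • (b ^ 3) = b ^ 3 - b ^ 2 + b := by
    simp only [smul_eq_mul, hsdef]
    field_simp
    ring
  have e3 : s • (b ^ 3 - b ^ 2 + 1) + (1 - s) • (b ^ 3) = b ^ 3 - b + 1 := by
    simp only [smul_eq_mul, hsdef]
    field_simp
    ring
  rw [e2] at h2
  rw [e3] at h3
  simp only [smul_eq_mul] at h2 h3
  nlinarith [h2, h3]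
end
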